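/- Let K and H be subgroups of a topological group G with K strongly neutral. Then the natural map q_K : G/H → K\G/H, defined by q_K(xH) = KxH, is continuous, open, and closed. -/

import Mathlib

open scoped Pointwise

/-- The quotient topology on the double coset space. -/
instance dosetQuotientTopology {G : Type*} [Group G] [TopologicalSpace G] (K H : Set G) :
    TopologicalSpace (DoubleCoset.Quotient K H) :=
  inferInstanceAs (TopologicalSpace (Quotient (DoubleCoset.setoid K H)))

/-- The natural map `q_K : G/H → K\G/H`, sending `xH` to `KxH`. -/
def qK {G : Type*} [Group G] (K H : Subgroup G) :
    G ⧸ H → DoubleCoset.Quotient (K : Set G) (H : Set G) :=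
  Quotient.lift (fun x => DoubleCoset.mk K H x)
    (fun a b h =>
      ((DoubleCoset.eq K H a b).mpr
        ⟨1, K.one_mem, a⁻¹ * b, QuotientGroup.leftRel_apply.mp h, by group⟩))

/-!
Both `G → G/H` and `G → K\G/H` are quotient maps and `q_K` factors the second through the first,
so `q_K` is continuous, and a set `U ⊆ G/H` has `q_K U` open (closed) in `K\G/H` exactly when
`K · π⁻¹(U)` is open (closed) in `G`. Left translates of an open set are open, so `q_K` is open.
For closedness one needs that `K F` is closed for every closed `F ⊆ G`; this is where strong
neutrality enters: if `x ∉ K F`, then `K` lies in the open set `(F x⁻¹)ᶜ`, hence so does `K V` for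
some open `V ∋ 1`, and then `V x` is a neighbourhood of `x` missing `K F`.
-/

section StronglyNeutral

variable {G : Type*} [Group G] [TopologicalSpace G]

def IsStronglyNeutral (K : Set G) : Prop :=
  ∀ O : Set G, IsOpen O → K ⊆ O → ∃ V : Set G, IsOpen V ∧ (1 : G) ∈ V ∧ K * V ⊆ O

variable [IsTopologicalGroup G]

theorem IsStronglyNeutral.isClosed_inv_mul {K F : Set G} (hK : IsStronglyNeutral K)
    (hF : IsClosed F) : IsClosed (K⁻¹ * F) := by
  rw [← isOpen_compl_iff, isOpen_iff_forall_mem_open]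
  intro x hx
  have hO : IsOpen (F * {x⁻¹})ᶜ := by
    rw [Set.mul_singleton]
    exact ((Homeomorph.mulRight x⁻¹).isClosedMap _ hF).isOpen_compl
  have hKO : K ⊆ (F * {x⁻¹})ᶜ := by
    rintro k hk ⟨f, hf, _, rfl, hfk⟩
    exact hx ⟨k⁻¹, by simpa using hk, f, hf, by rw [← hfk]; group⟩
  obtain ⟨V, hV, hV1, hKV⟩ := hK _ hO hKO
  refine ⟨V * {x}, ?_, hV.mul_right, ⟨1, hV1, x, rfl, one_mul x⟩⟩
  rintro _ ⟨v, hv, b, hb, rfl⟩ ⟨k, hk, f, hf, (hkf : k * f = v * b)⟩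
  have hkv : f * x⁻¹ = k⁻¹ * v := by
    rw [mul_inv_eq_iff_eq_mul, mul_assoc, ← Set.mem_singleton_iff.mp hb, ← hkf,
      inv_mul_cancel_left]
  exact hKV ⟨k⁻¹, hk, v, hv, rfl⟩ ⟨f, hf, x⁻¹, rfl, hkv⟩

theorem IsStronglyNeutral.isClosed_subgroup_mul {K : Subgroup G}
    (hK : IsStronglyNeutral (K : Set G)) {F : Set G} (hF : IsClosed F) :
    IsClosed ((K : Set G) * F) := by
  simpa only [inv_coe_set] using hK.isClosed_inv_mul hF

end StronglyNeutral

section DoubleCosetQuotient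

variable {G : Type*} [Group G] (K H : Subgroup G)

theorem qK_comp_mk : qK K H ∘ QuotientGroup.mk = DoubleCoset.mk K H := rfl

theorem doubleCoset_mk_preimage_qK_image (U : Set (G ⧸ H)) :
    DoubleCoset.mk K H ⁻¹' (qK K H '' U) = (K : Set G) * (QuotientGroup.mk ⁻¹' U) := by
  ext x
  constructor
  · rintro ⟨u, hu, hux⟩
    obtain ⟨g, rfl⟩ := QuotientGroup.mk_surjective u
    obtain ⟨k, hk, h, hh, rfl⟩ := (DoubleCoset.eq K H g x).mp hux
    refine ⟨k, hk, g * h, ?_, by group⟩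
    rwa [Set.mem_preimage, QuotientGroup.mk_mul_of_mem g hh]
  · rintro ⟨k, hk, g, hg, rfl⟩
    exact ⟨g, hg, (DoubleCoset.eq K H g (k * g)).mpr ⟨k, hk, 1, H.one_mem, by group⟩⟩

variable [TopologicalSpace G]

theorem isQuotientMap_doubleCoset_mk : Topology.IsQuotientMap (DoubleCoset.mk K H) :=
  isQuotientMap_quotient_mk'

theorem continuous_qK : Continuous (qK K H) := by
  rw [(QuotientGroup.isQuotientMap_mk H).continuous_iff, qK_comp_mk]
  exact (isQuotientMap_doubleCoset_mk K H).continuous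

variable [IsTopologicalGroup G]

theorem isOpenMap_qK : IsOpenMap (qK K H) := by
  intro U hU
  rw [← (isQuotientMap_doubleCoset_mk K H).isOpen_preimage, doubleCoset_mk_preimage_qK_image]
  exact (hU.preimage QuotientGroup.continuous_mk).mul_left

theorem isClosedMap_qK {K : Subgroup G} (hK : IsStronglyNeutral (K : Set G)) :
    IsClosedMap (qK K H) := by
  intro C hC
  rw [← (isQuotientMap_doubleCoset_mk K H).isClosed_preimage, doubleCoset_mk_preimage_qK_image]
  exact hK.isClosed_subgroup_mul (hC.preimage QuotientGroup.continuous_mk)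

end DoubleCosetQuotient

/-- if `K` is strongly neutral, the natural map
`q_K : G/H → K\G/H` is continuous, open and closed. -/
theorem stmt_7 {G : Type*} [Group G] [TopologicalSpace G] [IsTopologicalGroup G]
    (K H : Subgroup G)
    (hK : ∀ O : Set G, IsOpen O → (K : Set G) ⊆ O →
      ∃ V : Set G, IsOpen V ∧ (1 : G) ∈ V ∧ (K : Set G) * V ⊆ O) :
    Continuous (qK K H) ∧ IsOpenMap (qK K H) ∧ IsClosedMap (qK K H) :=
  ⟨continuous_qK K H, isOpenMap_qK K H, isClosedMap_qK H hK⟩
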